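/- Let G be the subgroup of the unit group ℍˣ of the real quaternions consisting of the 48 elements given by the union of the 24 Hurwitz units with the 24 quaternions (ε a + ε' b)/√2 for two-element subsets {a,b} ⊆ {1,i,j,k} and ε, ε' ∈ {±1} (the binary octahedral group 2O, i.e. the group of rotors generated by the reflections of B₃). Then −1 lies in the center of G, and the quotient group G/{±1} is isomorphic to the symmetric group on 4 letters (the rotation group of the octahedron); in particular G has order 48 and is a double cover of the chiral octahedral group. -/

import Mathlib

noncomputable section

/-- The quaternion unit `i`. -/
def qi : Quaternion ℝ := ⟨0, 1, 0, 0⟩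
/-- The quaternion unit `j`. -/
def qj : Quaternion ℝ := ⟨0, 0, 1, 0⟩
/-- The quaternion unit `k`. -/
def qk : Quaternion ℝ := ⟨0, 0, 0, 1⟩

/-- The sign set `{1, -1}`. -/
def pm : Set ℝ := {1, -1}

/-- The 24 Hurwitz units `±1, ±i, ±j, ±k, (±1±i±j±k)/2`. -/
def hurwitzUnits : Set (Quaternion ℝ) :=
  {1, -1, qi, -qi, qj, -qj, qk, -qk} ∪
  {x | ∃ ε₀ ∈ pm, ∃ ε₁ ∈ pm, ∃ ε₂ ∈ pm, ∃ ε₃ ∈ pm,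
    x = (2 : ℝ)⁻¹ • (ε₀ • (1 : Quaternion ℝ) + ε₁ • qi + ε₂ • qj + ε₃ • qk)}

/-- The 24 quaternions `(ε a + ε' b)/√2` where `{a, b}` ranges over the
two-element subsets of `{1, i, j, k}` and `ε, ε' ∈ {±1}`. -/
def octPart : Set (Quaternion ℝ) :=
  {x | ∃ ε ∈ pm, ∃ ε' ∈ pm, ∃ a ∈ ({1, qi, qj, qk} : Set (Quaternion ℝ)),
    ∃ b ∈ ({1, qi, qj, qk} : Set (Quaternion ℝ)), a ≠ b ∧
      x = (Real.sqrt 2)⁻¹ • (ε • a + ε' • b)}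

/-!
The 24 Hurwitz units form the binary tetrahedral group `2T`, and `ω = (1 + i)/√2` normalizes `2T`
with `ω² = i ∈ 2T`. Hence `2T ⊔ ⟨ω⟩ = 2T ∪ ω • 2T` has order 48, and `ω • 2T` consists of the 24
quaternions `(±a ± b)/√2`. Conjugation permutes the four lines spanned by the body diagonals
`±i ± j ± k` of the cube; this gives a homomorphism to `S₄` whose kernel is `{±1}`, which is onto
since `48 / 2 = 24`.

Every element of the group is a real multiple of a quaternion with rational coordinates, and
conjugation does not see that scalar, so all finite verifications are exact computations in `ℍ[ℚ]`.
-/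

open Quaternion Pointwise MulAction ConjAct

theorem Submonoid.image_val_units_of_finite {M : Type*} [Monoid M] {S : Submonoid M}
    (hS : (S : Set M).Finite) (hS_unit : ∀ x ∈ S, IsUnit x) :
    Units.val '' (S.units : Set Mˣ) = S := by
  refine subset_antisymm (Set.image_subset_iff.mpr fun _ hu => hu.1) fun x hx => ?_
  obtain ⟨u, rfl⟩ := hS_unit x hx
  have pow_mem_S (n : ℕ) : ((u ^ n : Mˣ) : M) ∈ S := by
    rw [Units.val_pow_eq_pow_val]; exact pow_mem hx n
  have hu : IsOfFinOrder u := by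
    refine finite_powers.mp ((hS.preimage Units.val_injective.injOn).subset ?_)
    rintro _ ⟨n, rfl⟩
    exact pow_mem_S n
  obtain ⟨n, hn : u ^ n = u⁻¹⟩ :=
    hu.mem_powers_iff_mem_zpowers.mpr (inv_mem (Subgroup.mem_zpowers u))
  exact ⟨u, S.mem_units_of_val_mem_inv_val_mem hx (hn ▸ pow_mem_S n), rfl⟩

namespace Subgroup

variable {G : Type*} [Group G] {H : Subgroup G} {w : G}

theorem coe_sup_zpowers_of_sq_mem (hw : w ∈ normalizer (H : Set G)) (hw2 : w ^ 2 ∈ H) :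
    ((H ⊔ zpowers w : Subgroup G) : Set G) = (H : Set G) ∪ w • (H : Set G) := by
  rw [sup_comm, coe_mul_of_left_le_normalizer_right _ _ (zpowers_le.mpr hw)]
  refine subset_antisymm ?_ ?_
  · rintro _ ⟨_, ⟨n, rfl⟩, h, hh, rfl⟩
    obtain ⟨k, rfl | rfl⟩ := Int.even_or_odd' n
    · left
      simpa [zpow_mul] using mul_mem (zpow_mem hw2 k) hh
    · right
      refine ⟨w ^ (2 * k) * h, mul_mem ?_ hh, ?_⟩
      · simpa [zpow_mul] using zpow_mem hw2 k
      · simp only [smul_eq_mul, ← mul_assoc, ← zpow_one_add, add_comm]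
  · rintro _ (hx | ⟨h, hh, rfl⟩)
    · exact ⟨1, one_mem _, _, hx, one_mul _⟩
    · exact ⟨w, mem_zpowers w, h, hh, rfl⟩

theorem card_sup_zpowers_of_sq_mem [Finite H] (hw : w ∈ normalizer (H : Set G)) (hw2 : w ^ 2 ∈ H)
    (hwH : w ∉ H) : Nat.card (H ⊔ zpowers w : Subgroup G) = 2 * Nat.card H := by
  have hdisj : Disjoint (H : Set G) (w • (H : Set G)) := by
    refine Set.disjoint_left.mpr fun _ hx ⟨h, hh, hwh⟩ => hwH ?_
    simpa [← hwh] using mul_mem hx (inv_mem hh)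
  rw [← SetLike.coe_sort_coe, Nat.card_coe_set_eq, coe_sup_zpowers_of_sq_mem hw hw2,
    Set.ncard_union_eq hdisj (Set.toFinite _) ((Set.toFinite _).smul_set), Set.ncard_smul_set,
    ← Nat.card_coe_set_eq, SetLike.coe_sort_coe, two_mul]

end Subgroup

namespace MulAction

variable {G Y ι : Type*} [Group G] [MulAction G Y] {L : ι → Y}

def stabilizerRangePerm (hL : Function.Injective L) : stabilizer G (Set.range L) →* Equiv.Perm ι :=
  (Equiv.permCongrHom (Equiv.ofInjective L hL).symm).toMonoidHom.comp (toPermHom _ _)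

theorem apply_stabilizerRangePerm (hL : Function.Injective L) (g : stabilizer G (Set.range L))
    (t : ι) : L (stabilizerRangePerm hL g t) = (g : G) • L t := by
  simp [stabilizerRangePerm, Equiv.permCongr_apply, Equiv.apply_ofInjective_symm]

theorem stabilizerRangePerm_eq_one_iff (hL : Function.Injective L)
    (g : stabilizer G (Set.range L)) : stabilizerRangePerm hL g = 1 ↔ ∀ t, (g : G) • L t = L t := by
  simp only [Equiv.ext_iff, Equiv.Perm.one_apply, ← hL.eq_iff, apply_stabilizerRangePerm]

end MulAction

instance QuaternionAlgebra.instDecidableEq {R : Type*} {c₁ c₂ c₃ : R} [DecidableEq R] :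
    DecidableEq ℍ[R,c₁,c₂,c₃] :=
  fun _ _ => decidable_of_iff _ QuaternionAlgebra.ext_iff.symm

namespace Quaternion

instance instDecidableEq {R : Type*} [CommRing R] [DecidableEq R] : DecidableEq ℍ[R] :=
  inferInstanceAs (DecidableEq ℍ[R,-1,0,-1])

section Map

variable {R S : Type*} [CommRing R] [CommRing S] (f : R →+* S)

def map (x : ℍ[R]) : ℍ[S] := ⟨f x.re, f x.imI, f x.imJ, f x.imK⟩

@[simp] theorem re_map (x : ℍ[R]) : (map f x).re = f x.re := rfl
@[simp] theorem imI_map (x : ℍ[R]) : (map f x).imI = f x.imI := rfl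
@[simp] theorem imJ_map (x : ℍ[R]) : (map f x).imJ = f x.imJ := rfl
@[simp] theorem imK_map (x : ℍ[R]) : (map f x).imK = f x.imK := rfl

def mapRingHom : ℍ[R] →+* ℍ[S] where
  toFun := map f
  map_one' := by ext <;> simp
  map_mul' x y := by ext <;> simp [re_mul, imI_mul, imJ_mul, imK_mul]
  map_zero' := by ext <;> simp
  map_add' x y := by ext <;> simp

variable {f}

theorem mapRingHom_injective (hf : Function.Injective f) : Function.Injective (mapRingHom f) :=
  fun x y h => by
    ext <;> apply hf
    exacts [congrArg QuaternionAlgebra.re h, congrArg QuaternionAlgebra.imI h,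
      congrArg QuaternionAlgebra.imJ h, congrArg QuaternionAlgebra.imK h]

end Map

abbrev ofRat : ℍ[ℚ] →+* ℍ[ℝ] := mapRingHom (Rat.castHom ℝ)

theorem ofRat_injective : Function.Injective ofRat :=
  mapRingHom_injective (Rat.castHom ℝ).injective

@[simp] theorem re_ofRat (x : ℍ[ℚ]) : (ofRat x).re = x.re := rfl

@[simp] theorem ofRat_smul (q : ℚ) (x : ℍ[ℚ]) : ofRat (q • x) = (q : ℝ) • ofRat x := by
  ext <;> simp [mapRingHom, Rat.smul_def]

end Quaternion

def qiRat : ℍ[ℚ] := ⟨0, 1, 0, 0⟩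
def qjRat : ℍ[ℚ] := ⟨0, 0, 1, 0⟩
def qkRat : ℍ[ℚ] := ⟨0, 0, 0, 1⟩

@[simp] theorem ofRat_qiRat : ofRat qiRat = qi := by ext <;> simp [mapRingHom, map, qiRat, qi]
@[simp] theorem ofRat_qjRat : ofRat qjRat = qj := by ext <;> simp [mapRingHom, map, qjRat, qj]
@[simp] theorem ofRat_qkRat : ofRat qkRat = qk := by ext <;> simp [mapRingHom, map, qkRat, qk]

def signs : List ℚ := [1, -1]

def hurwitzUnitsRat : List ℍ[ℚ] :=
  [1, -1, qiRat, -qiRat, qjRat, -qjRat, qkRat, -qkRat] ++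
    signs.flatMap fun ε₀ => signs.flatMap fun ε₁ => signs.flatMap fun ε₂ => signs.flatMap fun ε₃ =>
      [(2⁻¹ : ℚ) • (ε₀ • 1 + ε₁ • qiRat + ε₂ • qjRat + ε₃ • qkRat)]

def basisRat : List ℍ[ℚ] := [1, qiRat, qjRat, qkRat]

/-- `√2 • octPart` over `ℚ`, in the shape of the definition of `octPart`. -/
def octPartRat : List ℍ[ℚ] :=
  signs.flatMap fun ε => signs.flatMap fun ε' => basisRat.flatMap fun a => basisRat.flatMap fun b =>
    if a ≠ b then [ε • a + ε' • b] else []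

theorem exists_mem_pm {P : ℝ → Prop} : (∃ ε ∈ pm, P ε) ↔ ∃ ε ∈ signs, P ε := by
  simp [pm, signs]

theorem exists_mem_basis {P : ℍ[ℝ] → Prop} :
    (∃ a ∈ ({1, qi, qj, qk} : Set ℍ[ℝ]), P a) ↔ ∃ a ∈ basisRat, P (ofRat a) := by
  simp [basisRat]

theorem image_ofRat_hurwitzUnitsRat : ofRat '' {a | a ∈ hurwitzUnitsRat} = hurwitzUnits := by
  ext x
  simp [hurwitzUnits, hurwitzUnitsRat, exists_mem_pm, eq_comm, or_assoc, and_assoc,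
    -Rat.smul_one_eq_cast]

theorem smul_image_ofRat_octPartRat :
    (Real.sqrt 2)⁻¹ • ofRat '' {a | a ∈ octPartRat} = octPart := by
  ext x
  simp only [octPart, octPartRat, exists_mem_pm, exists_mem_basis, Set.mem_smul_set,
    List.mem_flatMap, Set.mem_image, Set.mem_ofPred_eq, List.mem_ite_nil_right, List.mem_singleton]
  simp [ofRat_injective.eq_iff, eq_comm, and_assoc]

def omegaRat : ℍ[ℚ] := 1 + qiRat

/-- One endpoint of each body diagonal of the cube `[-1, 1]³ ⊆ Im ℍ`. -/
def diagonalRat : Fin 4 → ℍ[ℚ] :=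
  ![⟨0, 1, 1, 1⟩, ⟨0, 1, -1, -1⟩, ⟨0, -1, 1, -1⟩, ⟨0, -1, -1, 1⟩]

theorem mul_mem_hurwitzUnitsRat :
    ∀ a ∈ hurwitzUnitsRat, ∀ b ∈ hurwitzUnitsRat, a * b ∈ hurwitzUnitsRat := by
  decide +kernel

theorem ne_zero_of_mem_hurwitzUnitsRat : ∀ a ∈ hurwitzUnitsRat, a ≠ 0 := by decide +kernel

theorem card_toFinset_hurwitzUnitsRat : hurwitzUnitsRat.toFinset.card = 24 := by decide +kernel

theorem conj_omegaRat_mem_hurwitzUnitsRat : ∀ a ∈ hurwitzUnitsRat,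
    omegaRat * a * omegaRat⁻¹ ∈ hurwitzUnitsRat ∧ omegaRat⁻¹ * a * omegaRat ∈ hurwitzUnitsRat := by
  decide +kernel

theorem omegaRat_sq : omegaRat ^ 2 = (2 : ℚ) • qiRat := by decide +kernel

theorem omegaRat_mul_mem_octPartRat : ∀ a ∈ hurwitzUnitsRat, omegaRat * a ∈ octPartRat := by
  decide +kernel

theorem omegaRat_inv_mul_mem_hurwitzUnitsRat :
    ∀ b ∈ octPartRat, omegaRat⁻¹ * b ∈ hurwitzUnitsRat := by
  decide +kernel

theorem diagonalRat_injective_up_to_sign :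
    ∀ s t, diagonalRat s = diagonalRat t ∨ diagonalRat s = -diagonalRat t → s = t := by
  decide +kernel

theorem conj_diagonalRat : ∀ a ∈ hurwitzUnitsRat ++ octPartRat, ∀ t, ∃ s,
    a * diagonalRat t * a⁻¹ = diagonalRat s ∨ a * diagonalRat t * a⁻¹ = -diagonalRat s := by
  decide +kernel

theorem eq_one_or_neg_one_of_conj_diagonalRat : ∀ a ∈ hurwitzUnitsRat,
    (∀ t, a * diagonalRat t * a⁻¹ = diagonalRat t ∨ a * diagonalRat t * a⁻¹ = -diagonalRat t) →
      a = 1 ∨ a = -1 := by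
  decide +kernel

theorem not_conj_diagonalRat_of_mem_octPartRat : ∀ a ∈ octPartRat,
    ¬∀ t, a * diagonalRat t * a⁻¹ = diagonalRat t ∨ a * diagonalRat t * a⁻¹ = -diagonalRat t := by
  decide +kernel

theorem val_inv_eq_smul_ofRat {u : ℍ[ℝ]ˣ} {r : ℝ} {a : ℍ[ℚ]} (hu : (u : ℍ[ℝ]) = r • ofRat a) :
    ((u⁻¹ : ℍ[ℝ]ˣ) : ℍ[ℝ]) = r⁻¹ • ofRat a⁻¹ := by
  rw [Units.val_inv_eq_inv_val, hu, smul_inv₀, map_inv₀]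

theorem val_conj_ofRat {u : ℍ[ℝ]ˣ} {r : ℝ} {a : ℍ[ℚ]} (hr : r ≠ 0)
    (hu : (u : ℍ[ℝ]) = r • ofRat a) (x : ℍ[ℚ]) :
    (u : ℍ[ℝ]) * ofRat x * ((u⁻¹ : ℍ[ℝ]ˣ) : ℍ[ℝ]) = ofRat (a * x * a⁻¹) := by
  rw [val_inv_eq_smul_ofRat hu, hu]
  simp only [smul_mul_assoc, mul_smul_comm, smul_smul, inv_mul_cancel₀ hr, one_smul, map_mul]

def hurwitzUnitsSubmonoid : Submonoid ℍ[ℚ] where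
  carrier := {a | a ∈ hurwitzUnitsRat}
  mul_mem' ha hb := mul_mem_hurwitzUnitsRat _ ha _ hb
  one_mem' := by simp [hurwitzUnitsRat]

def binaryTetrahedral : Subgroup ℍ[ℝ]ˣ := (hurwitzUnitsSubmonoid.map ofRat).units

theorem image_val_binaryTetrahedral :
    Units.val '' (binaryTetrahedral : Set ℍ[ℝ]ˣ) = ofRat '' {a | a ∈ hurwitzUnitsRat} :=
  Submonoid.image_val_units_of_finite ((List.finite_toSet _).image _) fun _ ⟨a, ha, hx⟩ =>
    isUnit_iff_ne_zero.mpr (hx ▸ (map_ne_zero_iff _ ofRat_injective).mpr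
      (ne_zero_of_mem_hurwitzUnitsRat a ha))

theorem mem_binaryTetrahedral {u : ℍ[ℝ]ˣ} :
    u ∈ binaryTetrahedral ↔ ∃ a ∈ hurwitzUnitsRat, ofRat a = u := by
  have := Units.val_injective.mem_set_image (s := (binaryTetrahedral : Set ℍ[ℝ]ˣ)) (a := u)
  rw [image_val_binaryTetrahedral] at this
  exact this.symm

theorem card_binaryTetrahedral : Nat.card binaryTetrahedral = 24 := by
  rw [← SetLike.coe_sort_coe, Nat.card_coe_set_eq,
    ← Set.ncard_image_of_injective _ Units.val_injective,
    image_val_binaryTetrahedral, Set.ncard_image_of_injective _ ofRat_injective,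
    ← card_toFinset_hurwitzUnitsRat, ← Set.ncard_coe_finset]
  simp

instance : Finite binaryTetrahedral := Nat.finite_of_card_ne_zero (by simp [card_binaryTetrahedral])

theorem ofRat_omegaRat_ne_zero : ofRat omegaRat ≠ 0 :=
  (map_ne_zero_iff _ ofRat_injective).mpr (by decide +kernel)

def omega : ℍ[ℝ]ˣ :=
  Units.mk0 ((Real.sqrt 2)⁻¹ • ofRat omegaRat) (smul_ne_zero (by positivity) ofRat_omegaRat_ne_zero)

theorem val_omega : (omega : ℍ[ℝ]) = (Real.sqrt 2)⁻¹ • ofRat omegaRat := rfl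

theorem omega_mem_normalizer : omega ∈ Subgroup.normalizer (binaryTetrahedral : Set ℍ[ℝ]ˣ) := by
  have hr : (Real.sqrt 2)⁻¹ ≠ 0 := by positivity
  refine Subgroup.mem_normalizer_iff.mpr fun h => ⟨fun hh => ?_, fun hh => ?_⟩
  · obtain ⟨a, ha, hah⟩ := mem_binaryTetrahedral.mp hh
    refine mem_binaryTetrahedral.mpr ⟨_, (conj_omegaRat_mem_hurwitzUnitsRat a ha).1, ?_⟩
    rw [← val_conj_ofRat hr val_omega, hah]
    simp
  · obtain ⟨a, ha, hah⟩ := mem_binaryTetrahedral.mp hh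
    have h_inv : ((omega⁻¹ : ℍ[ℝ]ˣ) : ℍ[ℝ]) = (Real.sqrt 2)⁻¹⁻¹ • ofRat omegaRat⁻¹ :=
      val_inv_eq_smul_ofRat val_omega
    have h_conj := val_conj_ofRat (inv_ne_zero hr) h_inv a
    simp only [inv_inv] at h_conj
    refine mem_binaryTetrahedral.mpr ⟨_, (conj_omegaRat_mem_hurwitzUnitsRat a ha).2, ?_⟩
    rw [← h_conj, hah]
    simp [mul_assoc]

theorem omega_sq_mem : omega ^ 2 ∈ binaryTetrahedral := by
  refine mem_binaryTetrahedral.mpr ⟨qiRat, by simp [hurwitzUnitsRat], ?_⟩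
  rw [Units.val_pow_eq_pow_val, val_omega, smul_pow, ← map_pow, omegaRat_sq, ofRat_smul, smul_smul,
    inv_pow, Real.sq_sqrt zero_le_two]
  norm_num

theorem omega_not_mem : omega ∉ binaryTetrahedral := fun h => by
  obtain ⟨a, -, ha⟩ := mem_binaryTetrahedral.mp h
  have hre := congrArg QuaternionAlgebra.re ha
  simp [val_omega, show omegaRat.re = 1 by decide +kernel] at hre
  exact irrational_sqrt_two.inv.ne_rat a.re hre.symm

def binaryOctahedral : Subgroup ℍ[ℝ]ˣ := binaryTetrahedral ⊔ Subgroup.zpowers omega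

theorem omega_smul_ofRat (a : ℍ[ℚ]) :
    (omega : ℍ[ℝ]) • ofRat a = (Real.sqrt 2)⁻¹ • ofRat (omegaRat * a) := by
  rw [smul_eq_mul, val_omega, smul_mul_assoc, map_mul]

theorem omega_smul_image_ofRat_hurwitzUnitsRat :
    (omega : ℍ[ℝ]) • ofRat '' {a | a ∈ hurwitzUnitsRat} =
      (Real.sqrt 2)⁻¹ • ofRat '' {a | a ∈ octPartRat} := by
  ext x
  constructor
  · rintro ⟨_, ⟨a, ha, rfl⟩, rfl⟩
    exact ⟨_, ⟨_, omegaRat_mul_mem_octPartRat a ha, rfl⟩, (omega_smul_ofRat a).symm⟩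
  · rintro ⟨_, ⟨b, hb, rfl⟩, rfl⟩
    refine ⟨_, ⟨_, omegaRat_inv_mul_mem_hurwitzUnitsRat b hb, rfl⟩, ?_⟩
    beta_reduce
    rw [omega_smul_ofRat, mul_inv_cancel_left₀ (by decide +kernel)]

theorem image_val_binaryOctahedral :
    Units.val '' (binaryOctahedral : Set ℍ[ℝ]ˣ) =
      ofRat '' {a | a ∈ hurwitzUnitsRat} ∪ (Real.sqrt 2)⁻¹ • ofRat '' {a | a ∈ octPartRat} := by
  rw [binaryOctahedral, Subgroup.coe_sup_zpowers_of_sq_mem omega_mem_normalizer omega_sq_mem,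
    Set.image_union, ← omega_smul_image_ofRat_hurwitzUnitsRat, ← image_val_binaryTetrahedral]
  exact congrArg _ (Set.image_smul_distrib (Units.coeHom ℍ[ℝ]) omega _)

theorem mem_binaryOctahedral {g : ℍ[ℝ]ˣ} :
    g ∈ binaryOctahedral ↔
      (∃ a ∈ hurwitzUnitsRat, ofRat a = g) ∨
        ∃ a ∈ octPartRat, (Real.sqrt 2)⁻¹ • ofRat a = g := by
  have := Units.val_injective.mem_set_image (s := (binaryOctahedral : Set ℍ[ℝ]ˣ)) (a := g)
  rw [image_val_binaryOctahedral] at this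
  simpa [Set.mem_smul_set] using this.symm

theorem card_binaryOctahedral : Nat.card binaryOctahedral = 48 := by
  rw [binaryOctahedral, Subgroup.card_sup_zpowers_of_sq_mem omega_mem_normalizer omega_sq_mem
    omega_not_mem, card_binaryTetrahedral]

theorem neg_one_mem_binaryOctahedral : (-1 : ℍ[ℝ]ˣ) ∈ binaryOctahedral :=
  Subgroup.mem_sup_left <| mem_binaryTetrahedral.mpr ⟨-1, by simp [hurwitzUnitsRat], by simp⟩

def diagonalAxis (t : Fin 4) : Set ℍ[ℝ] := {ofRat (diagonalRat t), -ofRat (diagonalRat t)}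

theorem diagonalAxis_injective : Function.Injective diagonalAxis := fun s t h => by
  have hs : ofRat (diagonalRat s) ∈ diagonalAxis t := h ▸ Set.mem_insert _ _
  refine diagonalRat_injective_up_to_sign s t ?_
  simpa [diagonalAxis, ← map_neg, ofRat_injective.eq_iff] using hs

theorem toConjAct_smul_diagonalAxis {g : ℍ[ℝ]ˣ} {r : ℝ} {a : ℍ[ℚ]} (hr : r ≠ 0)
    (hg : (g : ℍ[ℝ]) = r • ofRat a) (t : Fin 4) :
    toConjAct g • diagonalAxis t =
      {ofRat (a * diagonalRat t * a⁻¹), -ofRat (a * diagonalRat t * a⁻¹)} := by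
  rw [diagonalAxis, Set.smul_set_insert, Set.smul_set_singleton, smul_neg, units_smul_def,
    ofConjAct_toConjAct, val_conj_ofRat hr hg]

theorem exists_eq_smul_ofRat_of_mem {g : ℍ[ℝ]ˣ} (hg : g ∈ binaryOctahedral) :
    ∃ r : ℝ, r ≠ 0 ∧ ∃ a ∈ hurwitzUnitsRat ++ octPartRat, (g : ℍ[ℝ]) = r • ofRat a := by
  rcases mem_binaryOctahedral.mp hg with ⟨a, ha, h⟩ | ⟨a, ha, h⟩
  · exact ⟨1, one_ne_zero, a, List.mem_append_left _ ha, by rw [← h, one_smul]⟩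
  · exact ⟨_, by positivity, a, List.mem_append_right _ ha, h.symm⟩

theorem toConjAct_mem_stabilizer {g : ℍ[ℝ]ˣ} (hg : g ∈ binaryOctahedral) :
    toConjAct g ∈ stabilizer (ConjAct ℍ[ℝ]ˣ) (Set.range diagonalAxis) := by
  obtain ⟨r, hr, a, ha, hga⟩ := exists_eq_smul_ofRat_of_mem hg
  rw [mem_stabilizer_set' (Set.finite_range _)]
  rintro _ ⟨t, rfl⟩
  obtain ⟨s, hs | hs⟩ := conj_diagonalRat a ha t
  · exact ⟨s, by rw [toConjAct_smul_diagonalAxis hr hga, hs, diagonalAxis]⟩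
  · exact ⟨s, by rw [toConjAct_smul_diagonalAxis hr hga, hs, map_neg, neg_neg, diagonalAxis,
      Set.pair_comm]⟩

def diagonalPerm : binaryOctahedral →* Equiv.Perm (Fin 4) :=
  (stabilizerRangePerm diagonalAxis_injective).comp
    ((ConjAct.toConjAct.toMonoidHom.comp binaryOctahedral.subtype).codRestrict _
      fun g => toConjAct_mem_stabilizer g.2)

theorem conj_diagonalRat_of_smul_diagonalAxis_eq {g : ℍ[ℝ]ˣ} {r : ℝ} {a : ℍ[ℚ]} (hr : r ≠ 0)
    (hg : (g : ℍ[ℝ]) = r • ofRat a) {t : Fin 4}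
    (h : toConjAct g • diagonalAxis t = diagonalAxis t) :
    a * diagonalRat t * a⁻¹ = diagonalRat t ∨ a * diagonalRat t * a⁻¹ = -diagonalRat t := by
  have hmem : ofRat (a * diagonalRat t * a⁻¹) ∈ diagonalAxis t := by
    rw [← h, toConjAct_smul_diagonalAxis hr hg]
    exact Set.mem_insert _ _
  simpa only [diagonalAxis, Set.mem_insert_iff, Set.mem_singleton_iff, ← map_neg,
    ofRat_injective.eq_iff] using hmem

theorem diagonalPerm_eq_one_iff (g : binaryOctahedral) :
    diagonalPerm g = 1 ↔ ∀ t, toConjAct (g : ℍ[ℝ]ˣ) • diagonalAxis t = diagonalAxis t :=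
  stabilizerRangePerm_eq_one_iff _ _

theorem ker_diagonalPerm :
    (diagonalPerm.ker : Set binaryOctahedral) = {1, ⟨-1, neg_one_mem_binaryOctahedral⟩} := by
  ext g
  simp only [SetLike.mem_coe, MonoidHom.mem_ker, diagonalPerm_eq_one_iff, Set.mem_insert_iff,
    Set.mem_singleton_iff]
  constructor
  · intro hfix
    rcases mem_binaryOctahedral.mp g.2 with ⟨a, ha, hga⟩ | ⟨a, ha, hga⟩
    · rcases eq_one_or_neg_one_of_conj_diagonalRat a ha fun t =>
          conj_diagonalRat_of_smul_diagonalAxis_eq one_ne_zero (by rw [← hga, one_smul]) (hfix t)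
        with rfl | rfl
      · exact Or.inl (Subtype.ext (Units.ext (by simp [← hga])))
      · exact Or.inr (Subtype.ext (Units.ext (by simp [← hga])))
    · exact (not_conj_diagonalRat_of_mem_octPartRat a ha fun t =>
        conj_diagonalRat_of_smul_diagonalAxis_eq (by positivity) hga.symm (hfix t)).elim
  · rintro (rfl | rfl) t
    · simp
    · rw [toConjAct_smul_diagonalAxis (r := -1) (a := 1) (by norm_num) (by simp)]
      simp [diagonalAxis]

theorem diagonalPerm_surjective : Function.Surjective diagonalPerm := by
  have : Finite binaryOctahedral := Nat.finite_of_card_ne_zero (by simp [card_binaryOctahedral])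
  refine diagonalPerm.surjective_of_card_ker_le_div ?_
  rw [card_binaryOctahedral, Nat.card_perm, Nat.card_fin, ← SetLike.coe_sort_coe, ker_diagonalPerm,
    Nat.card_coe_set_eq]
  exact (Set.ncard_insert_le _ _).trans (by simp [Nat.factorial])

/-- Let `G` be the subgroup of `ℍˣ` whose underlying set is the union of the
24 Hurwitz units with the 24 quaternions `(ε a + ε' b)/√2` (the binary
octahedral group `2O`, the group of rotors generated by the reflections of
`B₃`). Then `−1 ∈ G` lies in the center of `G`, there is a surjective
homomorphism `G → S₄` whose kernel is exactly `{1, −1}` (so `G/{±1} ≅ S₄`,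
the rotation group of the octahedron), and `G` has order 48: it is a double
cover of the chiral octahedral group. -/
theorem binary_octahedral_double_cover :
    ∃ G : Subgroup (Quaternion ℝ)ˣ,
      ((fun u : (Quaternion ℝ)ˣ => (u : Quaternion ℝ)) '' (G : Set (Quaternion ℝ)ˣ)
        = hurwitzUnits ∪ octPart) ∧
      Nat.card G = 48 ∧
      ∃ h : (-1 : (Quaternion ℝ)ˣ) ∈ G,
        (⟨-1, h⟩ : G) ∈ Subgroup.center G ∧
        ∃ φ : G →* Equiv.Perm (Fin 4),
          Function.Surjective φ ∧ (φ.ker : Set G) = {1, ⟨-1, h⟩} := by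
  refine ⟨binaryOctahedral, ?_, card_binaryOctahedral, neg_one_mem_binaryOctahedral,
    Subgroup.mem_center_iff.mpr fun g => Subtype.ext ((mul_neg_one _).trans (neg_one_mul _).symm),
    diagonalPerm, diagonalPerm_surjective, ker_diagonalPerm⟩
  rw [image_val_binaryOctahedral, image_ofRat_hurwitzUnitsRat, smul_image_ofRat_octPartRat]
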